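/- arXiv:1709.00585 — 4 statements merged into one kernel-verified Lean document; each statement's English description precedes it below -/
import Mathlib

section
/- If T, U ∈ GL⁺(H) and Λ = {Λ_i} is a (T,U)-controlled g-frame for H, then Λ is a g-frame for H. -/
open scoped RealInnerProductSpace


section Aux

variable {H : Type*} [NormedAddCommGroup H] [InnerProductSpace ℝ H] [CompleteSpace H]

lemma cs_pos (S : H →L[ℝ] H) (hS : IsSelfAdjoint S) (hpos : ∀ x : H, 0 ≤ ⟪S x, x⟫)
    (x y : H) : ⟪S x, y⟫ ^ 2 ≤ ⟪S x, x⟫ * ⟪S y, y⟫ := by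
  have hsym := hS.isSymmetric
  have key : ∀ t : ℝ, 0 ≤ ⟪S y, y⟫ * (t * t) + (2 * ⟪S x, y⟫) * t + ⟪S x, x⟫ := by
    intro t
    have h0 := hpos (x + t • y)
    have hexp : ⟪S (x + t • y), x + t • y⟫
        = ⟪S x, x⟫ + 2 * ⟪S x, y⟫ * t + ⟪S y, y⟫ * (t * t) := by
      have h1 : S (x + t • y) = S x + t • S y := by
        rw [map_add, map_smul]
      rw [h1]
      have h2 : ⟪S y, x⟫ = ⟪S x, y⟫ := (hsym y x).trans (real_inner_comm (S x) y)
      simp only [inner_add_left, inner_add_right, real_inner_smul_left,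
        real_inner_smul_right, h2]
      ring
    rw [hexp] at h0
    linarith
  have hd := discrim_le_zero key
  rw [discrim] at hd
  nlinarith [hd]

lemma coercive (S : H →L[ℝ] H) (hS : IsSelfAdjoint S) (hpos : ∀ x : H, 0 ≤ ⟪S x, x⟫)
    (hinv : IsUnit S) : ∃ c : ℝ, 0 < c ∧ ∀ z : H, c * ‖z‖ ^ 2 ≤ ⟪S z, z⟫ := by
  obtain ⟨u, hu⟩ := hinv
  set R : H →L[ℝ] H := ↑u⁻¹ with hR
  have hSR : ∀ z, S (R z) = z := by
    intro z
    have h1 : S * R = 1 := by rw [← hu, hR]; exact u.mul_inv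
    calc S (R z) = (S * R) z := rfl
    _ = z := by rw [h1]; rfl
  refine ⟨(‖R‖ + 1)⁻¹, by positivity, ?_⟩
  intro z
  rcases eq_or_ne z 0 with rfl | hz
  · simp
  have hz0 : 0 < ‖z‖ := norm_pos_iff.2 hz
  have h1 : ‖z‖ ^ 2 = ⟪S (R z), z⟫ := by
    rw [hSR, real_inner_self_eq_norm_sq]
  have h2 := cs_pos S hS hpos (R z) z
  have h3 : ⟪S (R z), R z⟫ = ⟪z, R z⟫ := by rw [hSR]
  have h4 : ⟪z, R z⟫ ≤ (‖R‖ + 1) * ‖z‖ ^ 2 := by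
    calc ⟪z, R z⟫ ≤ ‖z‖ * ‖R z‖ := real_inner_le_norm z (R z)
    _ ≤ ‖z‖ * (‖R‖ * ‖z‖) := by
        have := R.le_opNorm z
        nlinarith
    _ ≤ (‖R‖ + 1) * ‖z‖ ^ 2 := by nlinarith
  have h5 : 0 ≤ ⟪S z, z⟫ := hpos z
  have h6 : (‖z‖ ^ 2) ^ 2 ≤ (‖R‖ + 1) * ‖z‖ ^ 2 * ⟪S z, z⟫ := by
    calc (‖z‖ ^ 2) ^ 2 = ⟪S (R z), z⟫ ^ 2 := by rw [h1]
    _ ≤ ⟪S (R z), R z⟫ * ⟪S z, z⟫ := h2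
    _ = ⟪z, R z⟫ * ⟪S z, z⟫ := by rw [h3]
    _ ≤ (‖R‖ + 1) * ‖z‖ ^ 2 * ⟪S z, z⟫ := by
        exact mul_le_mul_of_nonneg_right h4 h5
  have hRpos : 0 < ‖R‖ + 1 := by positivity
  rw [inv_mul_le_iff₀ hRpos]
  have ht : 0 < ‖z‖ ^ 2 := by positivity
  nlinarith [h6, ht]

end Aux

section Phi

variable {H : Type*} [NormedAddCommGroup H] [InnerProductSpace ℝ H] [CompleteSpace H]
variable {ι : Type*} {G : ι → Type*} [∀ i, NormedAddCommGroup (G i)]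
  [∀ i, InnerProductSpace ℝ (G i)]

lemma phi_bound (Λ : ∀ i, H →L[ℝ] G i) (T U : H →L[ℝ] H)
    (hsum : ∀ g : H, Summable fun i => |⟪Λ i (T g), Λ i (U g)⟫|) :
    ∃ K : ℝ, 0 ≤ K ∧ ∀ g : H, ∑' i, |⟪Λ i (T g), Λ i (U g)⟫| ≤ K * ‖g‖ ^ 2 := by
  classical
  set a : H → ι → ℝ := fun g i => ⟪Λ i (T g), Λ i (U g)⟫ with ha
  have hid : ∀ (g h : H) (i : ι),
      a h i = (a (g + h) i + a (g - h) i) / 2 - a g i := by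
    intro g h i
    have e1 : Λ i (T (g + h)) = Λ i (T g) + Λ i (T h) := by simp [map_add]
    have e2 : Λ i (U (g + h)) = Λ i (U g) + Λ i (U h) := by simp [map_add]
    have e3 : Λ i (T (g - h)) = Λ i (T g) - Λ i (T h) := by simp [map_sub]
    have e4 : Λ i (U (g - h)) = Λ i (U g) - Λ i (U h) := by simp [map_sub]
    simp only [ha, e1, e2, e3, e4, inner_add_left, inner_add_right,
      inner_sub_left, inner_sub_right]
    ring
  set C : ℕ → Set H := fun n => {g | ∀ F : Finset ι, ∑ i ∈ F, |a g i| ≤ (n : ℝ)} with hC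
  have hclosed : ∀ n, IsClosed (C n) := by
    intro n
    have : C n = ⋂ F : Finset ι, {g | ∑ i ∈ F, |a g i| ≤ (n : ℝ)} := by
      ext g; simp [hC, Set.mem_iInter]
    rw [this]
    refine isClosed_iInter fun F => isClosed_le ?_ continuous_const
    refine continuous_finset_sum _ fun i _ => ?_
    exact (Continuous.inner ((Λ i).continuous.comp T.continuous)
      ((Λ i).continuous.comp U.continuous)).abs
  have hcover : ⋃ n, C n = Set.univ := by
    rw [Set.eq_univ_iff_forall]
    intro g
    refine Set.mem_iUnion.2 ⟨⌈∑' i, |a g i|⌉₊, fun F => ?_⟩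
    calc ∑ i ∈ F, |a g i| ≤ ∑' i, |a g i| :=
          Summable.sum_le_tsum F (fun i _ => abs_nonneg _) (hsum g)
    _ ≤ ⌈∑' i, |a g i|⌉₊ := Nat.le_ceil _
  have : Nonempty H := ⟨0⟩
  obtain ⟨N, g₀, hg₀⟩ := nonempty_interior_of_iUnion_of_closed hclosed hcover
  obtain ⟨r, hr0, hball⟩ := Metric.mem_nhds_iff.1 (mem_interior_iff_mem_nhds.1 hg₀)
  have hsmall : ∀ h : H, ‖h‖ < r → ∀ F : Finset ι, ∑ i ∈ F, |a h i| ≤ 2 * N := by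
    intro h hh F
    have m1 : g₀ + h ∈ C N := hball (by
      simp only [Metric.mem_ball, dist_eq_norm, add_sub_cancel_left]; exact hh)
    have m2 : g₀ - h ∈ C N := hball (by
      simp only [Metric.mem_ball, dist_eq_norm, sub_sub_cancel_left]
      simpa using hh)
    have m3 : g₀ ∈ C N := hball (by simp [Metric.mem_ball, hr0])
    have hterm : ∀ i ∈ F, |a h i| ≤ (|a (g₀ + h) i| + |a (g₀ - h) i|) / 2 + |a g₀ i| := by
      intro i _
      rw [hid g₀ h i]
      calc |(a (g₀ + h) i + a (g₀ - h) i) / 2 - a g₀ i|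
          ≤ |(a (g₀ + h) i + a (g₀ - h) i) / 2| + |a g₀ i| := abs_sub _ _
      _ ≤ (|a (g₀ + h) i| + |a (g₀ - h) i|) / 2 + |a g₀ i| := by
          rw [abs_div]
          have := abs_add_le (a (g₀ + h) i) (a (g₀ - h) i)
          rw [abs_of_pos (by norm_num : (0:ℝ) < 2)]
          linarith
    calc ∑ i ∈ F, |a h i|
        ≤ ∑ i ∈ F, ((|a (g₀ + h) i| + |a (g₀ - h) i|) / 2 + |a g₀ i|) :=
          Finset.sum_le_sum hterm
    _ = (∑ i ∈ F, |a (g₀ + h) i| + ∑ i ∈ F, |a (g₀ - h) i|) / 2 + ∑ i ∈ F, |a g₀ i| := by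
        simp only [add_div, Finset.sum_add_distrib, ← Finset.sum_div]
    _ ≤ ((N : ℝ) + N) / 2 + N := by
        have := m1 F; have := m2 F; have := m3 F
        linarith
    _ = 2 * N := by ring
  refine ⟨8 * N / r ^ 2, by positivity, ?_⟩
  intro g
  rcases eq_or_ne g 0 with rfl | hg
  · simp [ha]
  have hg0 : 0 < ‖g‖ := norm_pos_iff.2 hg
  set t : ℝ := r / (2 * ‖g‖) with htdef
  have ht0 : 0 < t := by positivity
  have hgne : ‖g‖ ≠ 0 := ne_of_gt hg0
  have hth : ‖t • g‖ < r := by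
    rw [norm_smul, Real.norm_eq_abs, abs_of_pos ht0]
    have he : t * ‖g‖ = r / 2 := by
      rw [htdef]; field_simp
    rw [he]; linarith
  have hhom : ∀ i, |a (t • g) i| = t ^ 2 * |a g i| := by
    intro i
    have e1 : Λ i (T (t • g)) = t • Λ i (T g) := by simp [map_smul]
    have e2 : Λ i (U (t • g)) = t • Λ i (U g) := by simp [map_smul]
    simp only [ha, e1, e2, real_inner_smul_left, real_inner_smul_right]
    have he : t * (t * (⟪Λ i (T g), Λ i (U g)⟫ : ℝ)) = t ^ 2 * ⟪Λ i (T g), Λ i (U g)⟫ := by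
      ring
    rw [he, abs_mul, abs_of_pos (by positivity : (0:ℝ) < t ^ 2)]
  refine Summable.tsum_le_of_sum_le (hsum g) fun F => ?_
  have h1 : ∑ i ∈ F, |a (t • g) i| = t ^ 2 * ∑ i ∈ F, |a g i| := by
    rw [Finset.mul_sum]
    exact Finset.sum_congr rfl fun i _ => hhom i
  have h2 := hsmall (t • g) hth F
  rw [h1] at h2
  have ht2 : t ^ 2 = r ^ 2 / (4 * ‖g‖ ^ 2) := by
    rw [htdef]; field_simp; ring
  have hr2 : 0 < r ^ 2 := by positivity
  have : ∑ i ∈ F, |a g i| ≤ 2 * N / t ^ 2 := by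
    rw [le_div_iff₀ (by positivity)]
    linarith [h2]
  calc ∑ i ∈ F, |a g i| ≤ 2 * N / t ^ 2 := this
  _ = 8 * N / r ^ 2 * ‖g‖ ^ 2 := by
      rw [ht2]; field_simp; ring

end Phi

section Main

variable {H : Type*} [NormedAddCommGroup H] [InnerProductSpace ℝ H] [CompleteSpace H]
variable {ι : Type*} {G : ι → Type*} [∀ i, NormedAddCommGroup (G i)]
  [∀ i, InnerProductSpace ℝ (G i)]

set_option maxHeartbeats 1000000 in
lemma bessel_of_controlled (Λ : ∀ i, H →L[ℝ] G i) (T U : H →L[ℝ] H)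
    (hTsa : IsSelfAdjoint T) (hTpos : ∀ f : H, 0 ≤ ⟪T f, f⟫) (hTinv : IsUnit T)
    (hUsa : IsSelfAdjoint U) (hUpos : ∀ f : H, 0 ≤ ⟪U f, f⟫) (hUinv : IsUnit U)
    (hsum : ∀ f : H, Summable fun i => ⟪Λ i (T f), Λ i (U f)⟫) :
    ∃ C1 : ℝ, 0 ≤ C1 ∧ ∀ (f : H) (F : Finset ι), ∑ i ∈ F, ‖Λ i f‖ ^ 2 ≤ C1 * ‖f‖ ^ 2 := by
  classical
  obtain ⟨K, hK0, hK⟩ := phi_bound Λ T U fun g => (hsum g).abs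
  obtain ⟨cT, hcT, hTco⟩ := coercive T hTsa hTpos hTinv
  obtain ⟨u, hu⟩ := hUinv
  set U' : H →L[ℝ] H := ↑u⁻¹ with hU'def
  have hmulUU' : U * U' = 1 := by rw [← hu]; exact u.mul_inv
  have hmulU'U : U' * U = 1 := by rw [← hu]; exact u.inv_mul
  have hUU' : ∀ x, U (U' x) = x := by
    intro x
    calc U (U' x) = (U * U') x := rfl
    _ = x := by rw [hmulUU']; rfl
  have hU'U : ∀ x, U' (U x) = x := by
    intro x
    calc U' (U x) = (U' * U) x := rfl
    _ = x := by rw [hmulU'U]; rfl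
  have hU'sa : IsSelfAdjoint U' := by
    have h1 : star U' * U = 1 := by
      have h2 : star (U * U') = 1 := by rw [hmulUU', star_one]
      rwa [star_mul, hUsa.star_eq] at h2
    calc star U' = star U' * (U * U') := by rw [hmulUU', mul_one]
    _ = star U' * U * U' := by rw [mul_assoc]
    _ = U' := by rw [h1, one_mul]
  have hU'pos : ∀ x : H, 0 ≤ ⟪U' x, x⟫ := by
    intro x
    calc (0:ℝ) ≤ ⟪U (U' x), U' x⟫ := hUpos _
    _ = ⟪U' x, U (U' x)⟫ := real_inner_comm _ _
    _ = ⟪U' x, x⟫ := by rw [hUU' x]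
  obtain ⟨cU', hcU', hU'co⟩ := coercive U' hU'sa hU'pos (Units.isUnit u⁻¹)
  set P : H →L[ℝ] H := T + U with hPdef
  have hPapp : ∀ z, P z = T z + U z := fun _ => rfl
  have hPco : ∀ z : H, cT * ‖z‖ ^ 2 ≤ ⟪P z, z⟫ := by
    intro z
    have h1 := hTco z
    have h2 := hUpos z
    rw [hPapp, inner_add_left]
    linarith
  have hB : IsCoercive ((innerSL ℝ).comp P : H →L[ℝ] H →L[ℝ] ℝ) := by
    refine ⟨cT, hcT, fun z => ?_⟩
    have h1 := hPco z
    have he : ((innerSL ℝ).comp P : H →L[ℝ] H →L[ℝ] ℝ) z z = ⟪P z, z⟫ := rfl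
    rw [he]
    nlinarith [h1]
  set e := hB.continuousLinearEquivOfBilin with hedef
  have hPe : ∀ v, e v = P v := by
    intro v
    have h1 : ∀ w : H, ⟪e v, w⟫ = ⟪P v, w⟫ := fun w =>
      hB.continuousLinearEquivOfBilin_apply v w
    have h2 : ∀ w : H, ⟪e v - P v, w⟫ = 0 := by
      intro w; rw [inner_sub_left, h1]; ring
    have h3 := h2 (e v - P v)
    rwa [inner_self_eq_zero, sub_eq_zero] at h3
  have hPsurj : ∀ x, P (e.symm x) = x := fun x => by
    rw [← hPe]; exact e.apply_symm_apply x
  clear_value e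
  set es : H →L[ℝ] H := (e.symm : H →L[ℝ] H) with hesdef
  set w : H → ℝ := fun x => ⟪U' x, x⟫ with hwdef
  have hwnn : ∀ x, 0 ≤ w x := hU'pos
  have hwup : ∀ x, w x ≤ (‖U'‖ + 1) * ‖x‖ ^ 2 := by
    intro x
    have h1 := U'.le_opNorm x
    have h2 : (0:ℝ) ≤ ‖x‖ := norm_nonneg x
    calc w x ≤ ‖U' x‖ * ‖x‖ := real_inner_le_norm _ _
    _ ≤ (‖U'‖ + 1) * ‖x‖ ^ 2 := by nlinarith
  have hwlow : ∀ x, cU' * ‖x‖ ^ 2 ≤ w x := hU'co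
  have hkey : ∀ z : H, w (P z) - w ((T - U) z) = 4 * ⟪T z, z⟫ := by
    intro z
    have e1 : P z = T z + U z := rfl
    have e2 : (T - U) z = T z - U z := rfl
    have e3 : ⟪U' (U z), T z⟫ = ⟪T z, z⟫ := by
      rw [hU'U z]; exact real_inner_comm _ _
    have e4 : ⟪U' (T z), U z⟫ = ⟪T z, z⟫ := by
      calc ⟪U' (T z), U z⟫ = ⟪T z, U' (U z)⟫ := hU'sa.isSymmetric (T z) (U z)
      _ = ⟪T z, z⟫ := by rw [hU'U z]
    simp only [hwdef, e1, e2, map_add, map_sub, inner_add_left, inner_add_right,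
      inner_sub_left, inner_sub_right]
    linarith [e3, e4]
  set Q : ℝ := (‖P‖ + 1) ^ 2 * (‖U'‖ + 1) with hQdef
  have hQ0 : 0 < Q := by positivity
  set δ : ℝ := 4 * cT / Q with hδdef
  have hδ0 : 0 < δ := by positivity
  have hδQ : δ * Q = 4 * cT := by
    rw [hδdef]; field_simp
  set rr : ℝ := max (1 - δ) 0 with hrrdef
  have hrr0 : 0 ≤ rr := le_max_right _ _
  have hrr1 : rr < 1 := by
    rw [hrrdef]; apply max_lt <;> linarith
  have h1r : 0 < 1 - rr := by linarith
  have hdecay : ∀ x : H, w ((T - U) (e.symm x)) ≤ rr * w x := by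
    intro x
    have hxz : P (e.symm x) = x := hPsurj x
    have hzx : ‖x‖ ≤ (‖P‖ + 1) * ‖e.symm x‖ := by
      conv_lhs => rw [← hxz]
      calc ‖P (e.symm x)‖ ≤ ‖P‖ * ‖e.symm x‖ := P.le_opNorm _
      _ ≤ (‖P‖ + 1) * ‖e.symm x‖ := by nlinarith [norm_nonneg (e.symm x)]
    have h1 : w x - w ((T - U) (e.symm x)) = 4 * ⟪T (e.symm x), e.symm x⟫ := by
      have h0 := hkey (e.symm x)
      rwa [hxz] at h0
    have h2 : 4 * cT * ‖e.symm x‖ ^ 2 ≤ 4 * ⟪T (e.symm x), e.symm x⟫ := by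
      linarith [hTco (e.symm x)]
    have h3 : ‖x‖ ^ 2 ≤ (‖P‖ + 1) ^ 2 * ‖e.symm x‖ ^ 2 := by
      nlinarith [norm_nonneg x, norm_nonneg (e.symm x)]
    have h4 : w x ≤ (‖U'‖ + 1) * ‖x‖ ^ 2 := hwup x
    have h5 : δ * w x ≤ 4 * cT * ‖e.symm x‖ ^ 2 := by
      calc δ * w x ≤ δ * ((‖U'‖ + 1) * ((‖P‖ + 1) ^ 2 * ‖e.symm x‖ ^ 2)) := by
            have h3' := mul_le_mul_of_nonneg_left h3 (by positivity : (0:ℝ) ≤ ‖U'‖ + 1)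
            have h6 : w x ≤ (‖U'‖ + 1) * ((‖P‖ + 1) ^ 2 * ‖e.symm x‖ ^ 2) :=
              le_trans h4 h3'
            exact mul_le_mul_of_nonneg_left h6 hδ0.le
      _ = δ * Q * ‖e.symm x‖ ^ 2 := by rw [hQdef]; ring
      _ = 4 * cT * ‖e.symm x‖ ^ 2 := by rw [hδQ]
    have h7 : w ((T - U) (e.symm x)) ≤ (1 - δ) * w x := by linarith
    have h8 : (1 - δ) * w x ≤ rr * w x :=
      mul_le_mul_of_nonneg_right (le_max_left _ _) (hwnn x)
    linarith
  set Ce : ℝ := (‖es‖ + 1) ^ 2 / cU' with hCe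
  have hCe0 : 0 ≤ Ce := by positivity
  have hes : ∀ x : H, ‖e.symm x‖ ^ 2 ≤ Ce * w x := by
    intro x
    have h1 : ‖e.symm x‖ ≤ (‖es‖ + 1) * ‖x‖ := by
      have h0 : ‖es x‖ ≤ ‖es‖ * ‖x‖ := es.le_opNorm x
      have h0' : es x = e.symm x := rfl
      rw [h0'] at h0
      nlinarith [norm_nonneg x]
    have h2 : cU' * ‖x‖ ^ 2 ≤ w x := hwlow x
    have h3 : ‖e.symm x‖ ^ 2 ≤ (‖es‖ + 1) ^ 2 * ‖x‖ ^ 2 := by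
      nlinarith [norm_nonneg (e.symm x), norm_nonneg x]
    rw [hCe, div_mul_eq_mul_div, le_div_iff₀ hcU']
    nlinarith [mul_le_mul_of_nonneg_left h2 (sq_nonneg (‖es‖ + 1))]
  set D : H → H := fun x => (T - U) (e.symm x) with hDdef
  refine ⟨4 * K * Ce / (1 - rr) * (‖U'‖ + 1),
    mul_nonneg (div_nonneg (by positivity) h1r.le) (by positivity), ?_⟩
  intro f F
  set LF : ℝ := ∑ i ∈ F, ‖Λ i‖ ^ 2 with hLF
  have hLF0 : 0 ≤ LF := Finset.sum_nonneg fun i _ => sq_nonneg _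
  set xn : ℕ → H := fun n => D^[n] f with hxn
  have hxn0 : xn 0 = f := rfl
  have hxnsucc : ∀ n, xn (n + 1) = D (xn n) := fun n => Function.iterate_succ_apply' D n f
  have hwxn : ∀ n, w (xn n) ≤ rr ^ n * w f := by
    intro n; induction n with
    | zero => simp [hxn0]
    | succ n ih =>
      rw [hxnsucc n]
      calc w (D (xn n)) ≤ rr * w (xn n) := hdecay (xn n)
      _ ≤ rr * (rr ^ n * w f) := mul_le_mul_of_nonneg_left ih hrr0
      _ = rr ^ (n + 1) * w f := by ring
  have hstep : ∀ x : H,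
      (∑ i ∈ F, ‖Λ i x‖ ^ 2) ≤ (∑ i ∈ F, ‖Λ i (D x)‖ ^ 2) + 4 * K * Ce * w x := by
    intro x
    have hxz : P (e.symm x) = x := hPsurj x
    have hterm : ∀ i, ‖Λ i (P (e.symm x))‖ ^ 2
        = ‖Λ i ((T - U) (e.symm x))‖ ^ 2 + 4 * ⟪Λ i (T (e.symm x)), Λ i (U (e.symm x))⟫ := by
      intro i
      have e1 : Λ i (P (e.symm x)) = Λ i (T (e.symm x)) + Λ i (U (e.symm x)) := by
        rw [hPapp, map_add]
      have e2 : Λ i ((T - U) (e.symm x)) = Λ i (T (e.symm x)) - Λ i (U (e.symm x)) := by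
        have h0 : (T - U) (e.symm x) = T (e.symm x) - U (e.symm x) := rfl
        rw [h0, map_sub]
      rw [e1, e2, norm_add_sq_real, norm_sub_sq_real]
      ring
    have hb : ∑ i ∈ F, ⟪Λ i (T (e.symm x)), Λ i (U (e.symm x))⟫ ≤ K * ‖e.symm x‖ ^ 2 := by
      calc ∑ i ∈ F, ⟪Λ i (T (e.symm x)), Λ i (U (e.symm x))⟫
          ≤ ∑ i ∈ F, |⟪Λ i (T (e.symm x)), Λ i (U (e.symm x))⟫| :=
            Finset.sum_le_sum fun i _ => le_abs_self _
      _ ≤ ∑' i, |⟪Λ i (T (e.symm x)), Λ i (U (e.symm x))⟫| :=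
            Summable.sum_le_tsum F (fun i _ => abs_nonneg _) ((hsum (e.symm x)).abs)
      _ ≤ K * ‖e.symm x‖ ^ 2 := hK (e.symm x)
    have hz2 : ‖e.symm x‖ ^ 2 ≤ Ce * w x := hes x
    have hb2 : ∑ i ∈ F, ⟪Λ i (T (e.symm x)), Λ i (U (e.symm x))⟫ ≤ K * (Ce * w x) :=
      le_trans hb (mul_le_mul_of_nonneg_left hz2 hK0)
    calc ∑ i ∈ F, ‖Λ i x‖ ^ 2 = ∑ i ∈ F, ‖Λ i (P (e.symm x))‖ ^ 2 := by rw [hxz]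
    _ = ∑ i ∈ F, ‖Λ i ((T - U) (e.symm x))‖ ^ 2
        + 4 * ∑ i ∈ F, ⟪Λ i (T (e.symm x)), Λ i (U (e.symm x))⟫ := by
        rw [Finset.mul_sum, ← Finset.sum_add_distrib]
        exact Finset.sum_congr rfl fun i _ => hterm i
    _ ≤ (∑ i ∈ F, ‖Λ i (D x)‖ ^ 2) + 4 * K * Ce * w x := by
        have hDx : ∀ i : ι, Λ i (D x) = Λ i ((T - U) (e.symm x)) := fun i => rfl
        have : ∑ i ∈ F, ‖Λ i (D x)‖ ^ 2 = ∑ i ∈ F, ‖Λ i ((T - U) (e.symm x))‖ ^ 2 :=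
          Finset.sum_congr rfl fun i _ => by rw [hDx i]
        rw [this]
        linarith
  have hiter : ∀ n : ℕ, (∑ i ∈ F, ‖Λ i f‖ ^ 2)
      ≤ (∑ i ∈ F, ‖Λ i (xn n)‖ ^ 2) + 4 * K * Ce * ∑ k ∈ Finset.range n, w (xn k) := by
    intro n; induction n with
    | zero => simp [hxn0]
    | succ n ih =>
      have hs := hstep (xn n)
      rw [← hxnsucc n] at hs
      rw [Finset.sum_range_succ]
      have h4 : (0:ℝ) ≤ 4 * K * Ce := by positivity
      nlinarith [hs, ih]
  have hgeom : ∀ n : ℕ, ∑ k ∈ Finset.range n, w (xn k) ≤ 1 / (1 - rr) * w f := by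
    intro n
    have hne : rr ≠ 1 := ne_of_lt hrr1
    have hpow : 0 ≤ rr ^ n := pow_nonneg hrr0 n
    calc ∑ k ∈ Finset.range n, w (xn k) ≤ ∑ k ∈ Finset.range n, rr ^ k * w f :=
        Finset.sum_le_sum fun k _ => hwxn k
    _ = (∑ k ∈ Finset.range n, rr ^ k) * w f := by rw [Finset.sum_mul]
    _ ≤ 1 / (1 - rr) * w f := by
        have h1 : ∑ k ∈ Finset.range n, rr ^ k ≤ 1 / (1 - rr) := by
          rw [geom_sum_eq hne]
          rw [show (rr ^ n - 1) / (rr - 1) = (1 - rr ^ n) / (1 - rr) by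
            rw [show (1 - rr ^ n) = -(rr ^ n - 1) by ring,
              show (1 - rr) = -(rr - 1) by ring, neg_div_neg_eq]]
          rw [div_le_div_iff₀ h1r h1r]
          nlinarith [hpow, h1r]
        exact mul_le_mul_of_nonneg_right h1 (hwnn f)
  have hfn : ∀ n : ℕ, (∑ i ∈ F, ‖Λ i (xn n)‖ ^ 2) ≤ LF / cU' * w f * rr ^ n := by
    intro n
    have h1 : ∑ i ∈ F, ‖Λ i (xn n)‖ ^ 2 ≤ LF * ‖xn n‖ ^ 2 := by
      rw [hLF, Finset.sum_mul]
      refine Finset.sum_le_sum fun i _ => ?_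
      have h0 := (Λ i).le_opNorm (xn n)
      nlinarith [norm_nonneg (xn n), norm_nonneg ((Λ i) (xn n)), norm_nonneg (Λ i)]
    have h2 : cU' * ‖xn n‖ ^ 2 ≤ w (xn n) := hwlow (xn n)
    have h3 := hwxn n
    have h4 : ‖xn n‖ ^ 2 ≤ rr ^ n * w f / cU' := by
      rw [le_div_iff₀ hcU']
      calc ‖xn n‖ ^ 2 * cU' = cU' * ‖xn n‖ ^ 2 := by ring
      _ ≤ w (xn n) := h2
      _ ≤ rr ^ n * w f := h3
    calc ∑ i ∈ F, ‖Λ i (xn n)‖ ^ 2 ≤ LF * ‖xn n‖ ^ 2 := h1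
    _ ≤ LF * (rr ^ n * w f / cU') := mul_le_mul_of_nonneg_left h4 hLF0
    _ = LF / cU' * w f * rr ^ n := by field_simp
  have hlim : Filter.Tendsto (fun n : ℕ => LF / cU' * w f * rr ^ n)
      Filter.atTop (nhds 0) := by
    have h0 := tendsto_pow_atTop_nhds_zero_of_lt_one hrr0 hrr1
    have h1 := h0.const_mul (LF / cU' * w f)
    simpa using h1
  have hfinal : (∑ i ∈ F, ‖Λ i f‖ ^ 2) - 4 * K * Ce * (1 / (1 - rr) * w f) ≤ 0 := by
    refine ge_of_tendsto' hlim fun n => ?_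
    have h1 := hiter n
    have h2 := hgeom n
    have h3 := hfn n
    have h4 : (0:ℝ) ≤ 4 * K * Ce := by positivity
    nlinarith [h1, h2, h3, h4]
  have hwf : w f ≤ (‖U'‖ + 1) * ‖f‖ ^ 2 := hwup f
  have hc : (0:ℝ) ≤ 4 * K * Ce * (1 / (1 - rr)) := by positivity
  calc ∑ i ∈ F, ‖Λ i f‖ ^ 2 ≤ 4 * K * Ce * (1 / (1 - rr) * w f) := by linarith
  _ ≤ 4 * K * Ce * (1 / (1 - rr) * ((‖U'‖ + 1) * ‖f‖ ^ 2)) := by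
      have := mul_le_mul_of_nonneg_left hwf (by positivity : (0:ℝ) ≤ 1 / (1 - rr))
      exact mul_le_mul_of_nonneg_left this (by positivity : (0:ℝ) ≤ 4 * K * Ce)
  _ = 4 * K * Ce / (1 - rr) * (‖U'‖ + 1) * ‖f‖ ^ 2 := by
      field_simp

end Main


/-- Proposition 2.3(1): if `T, U ∈ GL⁺(H)` and `Λ = {Λ_i}` is a `(T,U)`-controlled
g-frame for `H` (a g-Bessel sequence satisfying
`A‖f‖² ≤ Σ_i ⟨Λ_i T f, Λ_i U f⟩ ≤ B‖f‖²`), then `Λ` is a g-frame for `H`. -/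
theorem stmt1 {H : Type*} [NormedAddCommGroup H] [InnerProductSpace ℝ H] [CompleteSpace H]
    {ι : Type*} {G : ι → Type*} [∀ i, NormedAddCommGroup (G i)]
    [∀ i, InnerProductSpace ℝ (G i)]
    (Λ : ∀ i, H →L[ℝ] G i) (T U : H →L[ℝ] H)
    (hTsa : IsSelfAdjoint T) (hTpos : ∀ f : H, 0 ≤ ⟪T f, f⟫) (hTinv : IsUnit T)
    (hUsa : IsSelfAdjoint U) (hUpos : ∀ f : H, 0 ≤ ⟪U f, f⟫) (hUinv : IsUnit U)
    (Bes : ℝ) (hBes : ∀ f : H, ∑' i, ‖Λ i f‖ ^ 2 ≤ Bes * ‖f‖ ^ 2)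
    (A B : ℝ) (hA : 0 < A) (hAB : A ≤ B)
    (hframe : ∀ f : H, Summable (fun i => ⟪Λ i (T f), Λ i (U f)⟫) ∧
      A * ‖f‖ ^ 2 ≤ ∑' i, ⟪Λ i (T f), Λ i (U f)⟫ ∧
      ∑' i, ⟪Λ i (T f), Λ i (U f)⟫ ≤ B * ‖f‖ ^ 2) :
    ∃ C D : ℝ, 0 < C ∧ C ≤ D ∧ ∀ f : H,
      C * ‖f‖ ^ 2 ≤ ∑' i, ‖Λ i f‖ ^ 2 ∧ ∑' i, ‖Λ i f‖ ^ 2 ≤ D * ‖f‖ ^ 2 := by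
  obtain ⟨C1, hC10, hC1⟩ := bessel_of_controlled Λ T U hTsa hTpos hTinv hUsa hUpos hUinv
    (fun f => (hframe f).1)
  have hsq : ∀ x : H, Summable fun i => ‖Λ i x‖ ^ 2 := by
    intro x
    exact summable_of_sum_le (fun i => sq_nonneg _) (hC1 x)
  have htsum : ∀ x : H, ∑' i, ‖Λ i x‖ ^ 2 ≤ C1 * ‖x‖ ^ 2 := fun x =>
    Summable.tsum_le_of_sum_le (hsq x) (hC1 x)
  set E : ℝ := C1 * (‖T‖ + 1) ^ 2 + 1 with hE
  have hE0 : 0 < E := by positivity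
  set s : ℝ := E / A with hs
  have hs0 : 0 < s := by positivity
  have hST : ∀ f : H, ∑' i, ‖Λ i (T f)‖ ^ 2 ≤ C1 * (‖T‖ + 1) ^ 2 * ‖f‖ ^ 2 := by
    intro f
    calc ∑' i, ‖Λ i (T f)‖ ^ 2 ≤ C1 * ‖T f‖ ^ 2 := htsum (T f)
    _ ≤ C1 * ((‖T‖ + 1) ^ 2 * ‖f‖ ^ 2) := by
        have h1 : ‖T f‖ ≤ (‖T‖ + 1) * ‖f‖ :=
          le_trans (T.le_opNorm f) (by nlinarith [norm_nonneg f])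
        have h2 : ‖T f‖ ^ 2 ≤ (‖T‖ + 1) ^ 2 * ‖f‖ ^ 2 := by
          nlinarith [norm_nonneg (T f), norm_nonneg f]
        exact mul_le_mul_of_nonneg_left h2 hC10
    _ = C1 * (‖T‖ + 1) ^ 2 * ‖f‖ ^ 2 := by ring
  have hamgm : ∀ a b : ℝ, a * b ≤ 1 / (2 * s) * a ^ 2 + s / 2 * b ^ 2 := by
    intro a b
    have hkey : 1 / (2 * s) * a ^ 2 + s / 2 * b ^ 2 - a * b
        = 1 / (2 * s) * (a - s * b) ^ 2 := by
      field_simp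
      ring
    nlinarith [mul_nonneg (le_of_lt (by positivity : (0:ℝ) < 1 / (2 * s)))
      (sq_nonneg (a - s * b)), hkey]
  have hSU : ∀ f : H, A ^ 2 / E * ‖f‖ ^ 2 ≤ ∑' i, ‖Λ i (U f)‖ ^ 2 := by
    intro f
    have h1 : A * ‖f‖ ^ 2 ≤ ∑' i, ⟪Λ i (T f), Λ i (U f)⟫ := (hframe f).2.1
    have hsum1 : Summable fun i => 1 / (2 * s) * ‖Λ i (T f)‖ ^ 2 :=
      (hsq (T f)).mul_left _
    have hsum2 : Summable fun i => s / 2 * ‖Λ i (U f)‖ ^ 2 :=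
      (hsq (U f)).mul_left _
    have h2 : ∑' i, ⟪Λ i (T f), Λ i (U f)⟫
        ≤ ∑' i, (1 / (2 * s) * ‖Λ i (T f)‖ ^ 2 + s / 2 * ‖Λ i (U f)‖ ^ 2) := by
      refine Summable.tsum_le_tsum (fun i => ?_) (hframe f).1 (hsum1.add hsum2)
      calc ⟪Λ i (T f), Λ i (U f)⟫ ≤ ‖Λ i (T f)‖ * ‖Λ i (U f)‖ := real_inner_le_norm _ _
      _ ≤ 1 / (2 * s) * ‖Λ i (T f)‖ ^ 2 + s / 2 * ‖Λ i (U f)‖ ^ 2 := hamgm _ _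
    have h3 : ∑' i, (1 / (2 * s) * ‖Λ i (T f)‖ ^ 2 + s / 2 * ‖Λ i (U f)‖ ^ 2)
        = 1 / (2 * s) * ∑' i, ‖Λ i (T f)‖ ^ 2 + s / 2 * ∑' i, ‖Λ i (U f)‖ ^ 2 := by
      rw [Summable.tsum_add hsum1 hsum2, tsum_mul_left, tsum_mul_left]
    have h4 : 1 / (2 * s) * ∑' i, ‖Λ i (T f)‖ ^ 2
        ≤ 1 / (2 * s) * (C1 * (‖T‖ + 1) ^ 2 * ‖f‖ ^ 2) :=
      mul_le_mul_of_nonneg_left (hST f) (by positivity)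
    have h5 : 1 / (2 * s) * (C1 * (‖T‖ + 1) ^ 2 * ‖f‖ ^ 2) ≤ A / 2 * ‖f‖ ^ 2 := by
      have he : 1 / (2 * s) * E = A / 2 := by
        rw [hs]; field_simp
      have h6 : C1 * (‖T‖ + 1) ^ 2 ≤ E := by rw [hE]; linarith
      have h7 : 1 / (2 * s) * (C1 * (‖T‖ + 1) ^ 2 * ‖f‖ ^ 2)
          ≤ 1 / (2 * s) * (E * ‖f‖ ^ 2) := by
        have := mul_le_mul_of_nonneg_right h6 (sq_nonneg ‖f‖)
        exact mul_le_mul_of_nonneg_left this (by positivity)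
      calc 1 / (2 * s) * (C1 * (‖T‖ + 1) ^ 2 * ‖f‖ ^ 2)
          ≤ 1 / (2 * s) * (E * ‖f‖ ^ 2) := h7
      _ = 1 / (2 * s) * E * ‖f‖ ^ 2 := by ring
      _ = A / 2 * ‖f‖ ^ 2 := by rw [he]
    have h8 : A / 2 * ‖f‖ ^ 2 ≤ s / 2 * ∑' i, ‖Λ i (U f)‖ ^ 2 := by linarith
    have h9 : A ^ 2 / E = A / s := by rw [hs]; field_simp
    rw [h9]
    rw [div_mul_eq_mul_div, div_le_iff₀ hs0]
    calc A * ‖f‖ ^ 2 = 2 * (A / 2 * ‖f‖ ^ 2) := by ring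
    _ ≤ 2 * (s / 2 * ∑' i, ‖Λ i (U f)‖ ^ 2) := by linarith
    _ = (∑' i, ‖Λ i (U f)‖ ^ 2) * s := by ring
  obtain ⟨u, hu⟩ := hUinv
  set U' : H →L[ℝ] H := ↑u⁻¹ with hU'def
  have hmulUU' : U * U' = 1 := by rw [← hu]; exact u.mul_inv
  have hUU' : ∀ x, U (U' x) = x := by
    intro x
    calc U (U' x) = (U * U') x := rfl
    _ = x := by rw [hmulUU']; rfl
  set C : ℝ := A ^ 2 / E / (‖U‖ + 1) ^ 2 with hC
  have hC0 : 0 < C := by positivity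
  refine ⟨C, max C1 C, hC0, le_max_right _ _, fun f => ⟨?_, ?_⟩⟩
  · have h1 : A ^ 2 / E * ‖U' f‖ ^ 2 ≤ ∑' i, ‖Λ i f‖ ^ 2 := by
      have := hSU (U' f)
      rwa [show (fun i => ‖Λ i (U (U' f))‖ ^ 2) = fun i => ‖Λ i f‖ ^ 2 by
        funext i; rw [hUU' f]] at this
    have h2 : ‖f‖ ≤ (‖U‖ + 1) * ‖U' f‖ := by
      conv_lhs => rw [← hUU' f]
      calc ‖U (U' f)‖ ≤ ‖U‖ * ‖U' f‖ := U.le_opNorm _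
      _ ≤ (‖U‖ + 1) * ‖U' f‖ := by nlinarith [norm_nonneg (U' f)]
    have h3 : ‖f‖ ^ 2 ≤ (‖U‖ + 1) ^ 2 * ‖U' f‖ ^ 2 := by
      nlinarith [norm_nonneg f, norm_nonneg (U' f)]
    have h4 : C * ‖f‖ ^ 2 ≤ A ^ 2 / E * ‖U' f‖ ^ 2 := by
      rw [hC]
      calc A ^ 2 / E / (‖U‖ + 1) ^ 2 * ‖f‖ ^ 2
          ≤ A ^ 2 / E / (‖U‖ + 1) ^ 2 * ((‖U‖ + 1) ^ 2 * ‖U' f‖ ^ 2) :=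
            mul_le_mul_of_nonneg_left h3 (by positivity)
      _ = A ^ 2 / E * ‖U' f‖ ^ 2 := by field_simp
    linarith
  · calc ∑' i, ‖Λ i f‖ ^ 2 ≤ C1 * ‖f‖ ^ 2 := htsum f
    _ ≤ max C1 C * ‖f‖ ^ 2 := mul_le_mul_of_nonneg_right (le_max_left _ _) (sq_nonneg ‖f‖)
end

section
/- Let {Λ_i} be a g-frame for H with g-frame operator S_Λ = Σ_i Λ_i* Λ_i, and let T, U ∈ GL⁺(H) be operators that commute with each other and with S_Λ. Then {Λ_i} is a (T,U)-controlled g-frame for H. -/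
/-!
The controlled sum is `∑ᵢ ⟪Λᵢ T f, Λᵢ U f⟫ = ⟪S T f, U f⟫ = ⟪P f, f⟫` with `P = S T U`.
Since `S`, `T`, `U` are positive and pairwise commuting, `P` is positive, and it is invertible.
A positive invertible `P` is bounded below: `P⁻¹` is positive and commutes with `P`, so
`P (‖P⁻¹‖ - P⁻¹) = ‖P⁻¹‖ P - 1` is positive, i.e. `P ≥ ‖P⁻¹‖⁻¹`.
-/

open scoped InnerProductSpace InnerProduct
open Filter Topology Finset RCLike

/-- Riesz's iteration `a ↦ a - a²`. For `0 ≤ W ≤ 1` it writes `W = ∑ₖ aₖ² + aₙ` with `aₙ → 0`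
strongly, so an operator `S ≥ 0` commuting with `W` gives `S W = ∑ₖ aₖ S aₖ ≥ 0`. -/
def logisticSeq {R : Type*} [Ring R] (w : R) : ℕ → R
  | 0 => w
  | n + 1 => logisticSeq w n - logisticSeq w n * logisticSeq w n

section Ring
variable {R : Type*} [Ring R]

theorem sum_logisticSeq_mul_self_add (w : R) (n : ℕ) :
    ∑ k ∈ range n, logisticSeq w k * logisticSeq w k + logisticSeq w n = w := by
  induction n with
  | zero => simp [logisticSeq]
  | succ n ih =>
    conv_rhs => rw [← ih]
    rw [sum_range_succ, logisticSeq]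
    abel

theorem Commute.logisticSeq_right {s w : R} (h : Commute s w) (n : ℕ) :
    Commute s (logisticSeq w n) := by
  induction n with
  | zero => exact h
  | succ n ih => exact ih.sub_right (ih.mul_right ih)

end Ring

namespace ContinuousLinearMap

variable {𝕜 E : Type*} [RCLike 𝕜] [NormedAddCommGroup E] [InnerProductSpace 𝕜 E]

theorem re_inner_apply_self_le (T : E →L[𝕜] E) (x : E) : re ⟪T x, x⟫_𝕜 ≤ ‖T‖ * ‖x‖ ^ 2 :=
  calc re ⟪T x, x⟫_𝕜 ≤ ‖T x‖ * ‖x‖ := re_inner_le_norm _ _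
    _ ≤ ‖T‖ * ‖x‖ * ‖x‖ := by gcongr; exact T.le_opNorm x
    _ = ‖T‖ * ‖x‖ ^ 2 := by ring

theorem isPositive_units_inv (u : (E →L[𝕜] E)ˣ) (hu : (u : E →L[𝕜] E).IsPositive) :
    (↑u⁻¹ : E →L[𝕜] E).IsPositive := by
  have hinv : ∀ x, (u : E →L[𝕜] E) ((↑u⁻¹ : E →L[𝕜] E) x) = x := fun x => by
    rw [← mul_apply_eq_comp, u.mul_inv, one_apply_eq_self]
  refine isPositive_def.2 ⟨fun x y => ?_, fun x => ?_⟩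
  · change inner 𝕜 ((↑u⁻¹ : E →L[𝕜] E) x) y = inner 𝕜 x ((↑u⁻¹ : E →L[𝕜] E) y)
    conv_lhs => rw [← hinv y]
    rw [← hu.inner_left_eq_inner_right, hinv]
  · have h := hu.re_inner_nonneg_right ((↑u⁻¹ : E →L[𝕜] E) x)
    rwa [hinv] at h

variable [CompleteSpace E]

theorem _root_.IsSelfAdjoint.isPositive_smul_one_sub {T : E →L[𝕜] E} (hT : IsSelfAdjoint T)
    {r : ℝ} (hr : ‖T‖ ≤ r) : ((r : 𝕜) • 1 - T).IsPositive := by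
  refine isPositive_def'.2 ⟨(IsSelfAdjoint.smul (conj_ofReal r) (.one _)).sub hT,
    fun x => ?_⟩
  have hx : re ⟪(r : 𝕜) • x, x⟫_𝕜 = r * ‖x‖ ^ 2 := by
    rw [inner_smul_left, conj_ofReal, re_ofReal_mul, inner_self_eq_norm_sq]
  rw [reApplyInnerSelf_apply, sub_apply, inner_sub_left, map_sub, smul_apply, one_apply_eq_self,
    hx, sub_nonneg]
  calc re ⟪T x, x⟫_𝕜 ≤ ‖T‖ * ‖x‖ ^ 2 := T.re_inner_apply_self_le x
    _ ≤ r * ‖x‖ ^ 2 := by gcongr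

theorem isPositive_logisticSeq {W : E →L[𝕜] E} (hW : W.IsPositive) (hW1 : (1 - W).IsPositive)
    (n : ℕ) : (logisticSeq W n).IsPositive ∧ (1 - logisticSeq W n).IsPositive := by
  induction n with
  | zero => exact ⟨hW, hW1⟩
  | succ n ih =>
    obtain ⟨ha, ha1⟩ := ih
    set a := logisticSeq W n
    have hadj : a† = a := ha.isSelfAdjoint.adjoint_eq
    have split : logisticSeq W (n + 1) = a ∘L (1 - a) ∘L a† + (1 - a) ∘L a ∘L (1 - a)† := by
      rw [hadj, ha1.isSelfAdjoint.adjoint_eq, logisticSeq]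
      simp only [← mul_def]
      noncomm_ring
    constructor
    · rw [split]
      exact (ha1.conj_adjoint a).add (ha.conj_adjoint (1 - a))
    · have : 1 - logisticSeq W (n + 1) = (1 - a) + a† ∘L a := by
        rw [hadj, logisticSeq, ← mul_def]; abel
      rw [this]
      exact ha1.add (isPositive_adjoint_comp_self a)

theorem tendsto_logisticSeq_apply_zero {W : E →L[𝕜] E} (hW : W.IsPositive)
    (hW1 : (1 - W).IsPositive) (x : E) : Tendsto (fun n => logisticSeq W n x) atTop (𝓝 0) := by
  have hpos := isPositive_logisticSeq hW hW1
  have hsq : ∀ k, re ⟪(logisticSeq W k * logisticSeq W k) x, x⟫_𝕜 = ‖logisticSeq W k x‖ ^ 2 := by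
    intro k
    rw [mul_apply_eq_comp, (hpos k).1.inner_left_eq_inner_right, inner_self_eq_norm_sq]
  have hbound : ∀ n, ∑ k ∈ range n, ‖logisticSeq W k x‖ ^ 2 ≤ re ⟪W x, x⟫_𝕜 := by
    intro n
    conv_rhs => rw [← sum_logisticSeq_mul_self_add W n]
    simp only [add_apply, _root_.sum_apply, inner_add_left, sum_inner, map_add, map_sum, hsq]
    linarith [(hpos n).1.re_inner_nonneg_left x]
  have hsum := summable_of_sum_range_le (fun k => sq_nonneg _) hbound
  rw [tendsto_zero_iff_norm_tendsto_zero]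
  simpa using hsum.tendsto_atTop_zero.sqrt

theorem IsPositive.mul_of_commute_of_isPositive_one_sub {S W : E →L[𝕜] E} (hS : S.IsPositive)
    (hW : W.IsPositive) (hW1 : (1 - W).IsPositive) (h : Commute S W) : (S * W).IsPositive := by
  refine isPositive_def'.2 ⟨?_, fun x => ?_⟩
  · rw [IsSelfAdjoint, star_mul, hS.isSelfAdjoint.star_eq, hW.isSelfAdjoint.star_eq, h.eq]
  have hpos := isPositive_logisticSeq hW hW1
  have hterm : ∀ k, 0 ≤ re ⟪(S * (logisticSeq W k * logisticSeq W k)) x, x⟫_𝕜 := by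
    intro k
    rw [← mul_assoc, (h.logisticSeq_right k).eq, mul_assoc, mul_apply_eq_comp, mul_apply_eq_comp,
      (hpos k).1.inner_left_eq_inner_right]
    exact hS.re_inner_nonneg_left _
  have hsplit : ∀ n, re ⟪(S * W) x, x⟫_𝕜 =
      ∑ k ∈ range n, re ⟪(S * (logisticSeq W k * logisticSeq W k)) x, x⟫_𝕜 +
        re ⟪S (logisticSeq W n x), x⟫_𝕜 := by
    intro n
    conv_lhs => rw [← sum_logisticSeq_mul_self_add W n]
    simp only [mul_add, mul_sum, add_apply, _root_.sum_apply, inner_add_left, sum_inner, map_add,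
      map_sum, mul_apply_eq_comp]
  have hlim : Tendsto (fun n => re ⟪S (logisticSeq W n x), x⟫_𝕜) atTop (𝓝 0) := by
    have hS0 : Tendsto (fun n => S (logisticSeq W n x)) atTop (𝓝 0) := by
      simpa [Function.comp_def] using
        (S.continuous.tendsto 0).comp (tendsto_logisticSeq_apply_zero hW hW1 x)
    simpa [Function.comp_def] using
      (continuous_re.tendsto _).comp (hS0.inner (𝕜 := 𝕜) (tendsto_const_nhds (x := x)))
  rw [reApplyInnerSelf_apply]
  refine le_of_tendsto hlim (Eventually.of_forall fun n => ?_)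
  rw [hsplit n]
  exact le_add_of_nonneg_left (sum_nonneg fun k _ => hterm k)

theorem IsPositive.mul_of_commute {S W : E →L[𝕜] E} (hS : S.IsPositive) (hW : W.IsPositive)
    (h : Commute S W) : (S * W).IsPositive := by
  set c : ℝ := ‖W‖ + 1
  have hc : 0 < c := by positivity
  set W' : E →L[𝕜] E := ((c⁻¹ : ℝ) : 𝕜) • W
  have hW' : W'.IsPositive := hW.smul_of_nonneg (ofReal_nonneg.2 (by positivity))
  have hW'1 : (1 - W').IsPositive := by
    have hnorm : ‖W'‖ ≤ 1 := by
      rw [norm_smul, norm_ofReal, abs_of_pos (inv_pos.2 hc), inv_mul_le_iff₀ hc]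
      linarith
    simpa using hW'.isSelfAdjoint.isPositive_smul_one_sub hnorm
  have hscale : S * W = (c : 𝕜) • (S * W') := by
    rw [mul_smul_comm, smul_smul, ← ofReal_mul, mul_inv_cancel₀ hc.ne', ofReal_one, one_smul]
  rw [hscale]
  exact (hS.mul_of_commute_of_isPositive_one_sub hW' hW'1 (h.smul_right _)).smul_of_nonneg
    (ofReal_nonneg.2 hc.le)

theorem IsPositive.exists_pos_mul_norm_sq_le_of_isUnit {P : E →L[𝕜] E} (hP : P.IsPositive)
    (hunit : IsUnit P) : ∃ c > 0, ∀ x, c * ‖x‖ ^ 2 ≤ re ⟪P x, x⟫_𝕜 := by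
  obtain ⟨u, rfl⟩ := hunit
  set Q : E →L[𝕜] E := ↑u⁻¹
  have hQ : Q.IsPositive := isPositive_units_inv u hP
  have hcomm : Commute (u : E →L[𝕜] E) ((‖Q‖ : 𝕜) • 1 - Q) :=
    ((Commute.one_right _).smul_right _).sub_right (Commute.refl _).units_inv_right
  have hprod := hP.mul_of_commute (hQ.isSelfAdjoint.isPositive_smul_one_sub le_rfl) hcomm
  rw [mul_sub, mul_smul_comm, mul_one, u.mul_inv] at hprod
  refine ⟨(‖Q‖ + 1)⁻¹, by positivity, fun x => ?_⟩
  have h1 := hprod.re_inner_nonneg_left x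
  simp only [sub_apply, smul_apply, one_apply_eq_self, inner_sub_left, inner_smul_left,
    conj_ofReal, map_sub, re_ofReal_mul, inner_self_eq_norm_sq] at h1
  rw [inv_mul_le_iff₀ (by positivity)]
  nlinarith [hP.re_inner_nonneg_left x]

end ContinuousLinearMap

section GFrame

open ContinuousLinearMap

variable {𝕜 E ι : Type*} [RCLike 𝕜] [NormedAddCommGroup E] [InnerProductSpace 𝕜 E]
  {G : ι → Type*} [∀ i, NormedAddCommGroup (G i)] [∀ i, InnerProductSpace 𝕜 (G i)]
  {Λ : ∀ i, E →L[𝕜] G i}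

theorem hasSum_norm_sq_of_hasSum_inner {S : E →L[𝕜] E}
    (hS : ∀ g h, HasSum (fun i => ⟪Λ i g, Λ i h⟫_𝕜) ⟪S g, h⟫_𝕜) (f : E) :
    HasSum (fun i => ‖Λ i f‖ ^ 2) (re ⟪S f, f⟫_𝕜) := by
  simpa only [reCLM_apply, inner_self_eq_norm_sq] using reCLM.hasSum (hS f f)

theorem isPositive_of_hasSum_inner {S : E →L[𝕜] E}
    (hS : ∀ g h, HasSum (fun i => ⟪Λ i g, Λ i h⟫_𝕜) ⟪S g, h⟫_𝕜) : S.IsPositive := by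
  refine isPositive_def.2 ⟨fun g h => ?_, fun f => ?_⟩
  · change ⟪S g, h⟫_𝕜 = ⟪g, S h⟫_𝕜
    refine (hS g h).unique ?_
    simpa only [inner_conj_symm] using (hasSum_conj' 𝕜).2 (hS h g)
  · exact (hasSum_norm_sq_of_hasSum_inner hS f).nonneg fun i => sq_nonneg _

variable [CompleteSpace E]

theorem isUnit_of_hasSum_inner {S : E →L[𝕜] E}
    (hS : ∀ g h, HasSum (fun i => ⟪Λ i g, Λ i h⟫_𝕜) ⟪S g, h⟫_𝕜) {A : ℝ} (hA : 0 < A)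
    (hlow : ∀ f, A * ‖f‖ ^ 2 ≤ ∑' i, ‖Λ i f‖ ^ 2) : IsUnit S := by
  refine isUnit_of_forall_le_norm_inner_map S (c := ⟨A, hA.le⟩) hA fun f => ?_
  rw [mul_comm]
  calc A * ‖f‖ ^ 2 ≤ re ⟪S f, f⟫_𝕜 := (hasSum_norm_sq_of_hasSum_inner hS f).tsum_eq ▸ hlow f
    _ ≤ ‖⟪S f, f⟫_𝕜‖ := re_le_norm _

variable [∀ i, CompleteSpace (G i)]

theorem norm_sum_adjoint_apply_le {B : ℝ}
    (hΛ : ∀ f (t : Finset ι), ∑ i ∈ t, ‖Λ i f‖ ^ 2 ≤ B * ‖f‖ ^ 2) (t : Finset ι) (y : ∀ i, G i) :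
    ‖∑ i ∈ t, adjoint (Λ i) (y i)‖ ≤ √B * √(∑ i ∈ t, ‖y i‖ ^ 2) := by
  set v := ∑ i ∈ t, adjoint (Λ i) (y i)
  have hv : ‖v‖ * ‖v‖ ≤ √B * √(∑ i ∈ t, ‖y i‖ ^ 2) * ‖v‖ :=
    calc ‖v‖ * ‖v‖ = re ⟪v, v⟫_𝕜 := by rw [inner_self_eq_norm_sq, sq]
      _ = ∑ i ∈ t, re ⟪y i, Λ i v⟫_𝕜 := by
        simp only [v, sum_inner, map_sum, adjoint_inner_left]
      _ ≤ ∑ i ∈ t, ‖y i‖ * ‖Λ i v‖ := sum_le_sum fun i _ => re_inner_le_norm _ _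
      _ ≤ √(∑ i ∈ t, ‖y i‖ ^ 2) * √(∑ i ∈ t, ‖Λ i v‖ ^ 2) :=
        Real.sum_mul_le_sqrt_mul_sqrt _ _ _
      _ ≤ √(∑ i ∈ t, ‖y i‖ ^ 2) * √(B * ‖v‖ ^ 2) := by gcongr; exact hΛ v t
      _ = √B * √(∑ i ∈ t, ‖y i‖ ^ 2) * ‖v‖ := by
        rw [Real.sqrt_mul' _ (sq_nonneg _), Real.sqrt_sq (norm_nonneg _)]; ring
  rcases (norm_nonneg v).eq_or_lt with h0 | hpos
  · rw [← h0]; positivity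
  · exact le_of_mul_le_mul_right hv hpos

theorem summable_adjoint_apply {B : ℝ}
    (hΛ : ∀ f (t : Finset ι), ∑ i ∈ t, ‖Λ i f‖ ^ 2 ≤ B * ‖f‖ ^ 2) {y : ∀ i, G i}
    (hy : Summable fun i => ‖y i‖ ^ 2) : Summable fun i => adjoint (Λ i) (y i) := by
  rw [summable_iff_vanishing_norm]
  intro ε hε
  have hδ : 0 < ε / (√B + 1) := by positivity
  obtain ⟨s, hs⟩ := summable_iff_vanishing_norm.1 hy _ (pow_pos hδ 2)
  refine ⟨s, fun t ht => ?_⟩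
  have hyt : √(∑ i ∈ t, ‖y i‖ ^ 2) < ε / (√B + 1) :=
    (Real.sqrt_lt' hδ).2 ((le_abs_self _).trans_lt (hs t ht))
  calc ‖∑ i ∈ t, adjoint (Λ i) (y i)‖ ≤ √B * √(∑ i ∈ t, ‖y i‖ ^ 2) :=
        norm_sum_adjoint_apply_le hΛ t y
    _ ≤ √B * (ε / (√B + 1)) := by gcongr
    _ < ε := by
      rw [mul_div_assoc', div_lt_iff₀ (by positivity)]
      nlinarith [Real.sqrt_nonneg B]

theorem hasSum_inner_of_bessel {B : ℝ}
    (hΛ : ∀ f (t : Finset ι), ∑ i ∈ t, ‖Λ i f‖ ^ 2 ≤ B * ‖f‖ ^ 2) {S : E →L[𝕜] E}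
    (hS : ∀ f, S f = ∑' i, adjoint (Λ i) (Λ i f)) (g h : E) :
    HasSum (fun i => ⟪Λ i g, Λ i h⟫_𝕜) ⟪S g, h⟫_𝕜 := by
  have hg : Summable fun i => ‖Λ i g‖ ^ 2 :=
    summable_of_sum_le (fun i => sq_nonneg _) (hΛ g)
  have := (summable_adjoint_apply hΛ hg).hasSum.mapL (innerSLFlip 𝕜 h)
  simpa only [innerSLFlip_apply_apply, adjoint_inner_left, ← hS] using this

end GFrame

open scoped RealInnerProductSpace

theorem stmt2_general {H : Type*} [NormedAddCommGroup H] [InnerProductSpace ℝ H] [CompleteSpace H]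
    {ι : Type*} {G : ι → Type*} [∀ i, NormedAddCommGroup (G i)]
    [∀ i, InnerProductSpace ℝ (G i)] [∀ i, CompleteSpace (G i)]
    (Λ : ∀ i, H →L[ℝ] G i)
    (A B : ℝ) (hA : 0 < A)
    (hframe : ∀ f : H, Summable (fun i => ‖Λ i f‖ ^ 2) ∧
      A * ‖f‖ ^ 2 ≤ ∑' i, ‖Λ i f‖ ^ 2 ∧ ∑' i, ‖Λ i f‖ ^ 2 ≤ B * ‖f‖ ^ 2)
    (S : H →L[ℝ] H)
    (hS : ∀ f : H, S f = ∑' i, (ContinuousLinearMap.adjoint (Λ i)) (Λ i f))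
    (T U : H →L[ℝ] H)
    (hTsa : IsSelfAdjoint T) (hTpos : ∀ f : H, 0 ≤ ⟪T f, f⟫) (hTinv : IsUnit T)
    (hUsa : IsSelfAdjoint U) (hUpos : ∀ f : H, 0 ≤ ⟪U f, f⟫) (hUinv : IsUnit U)
    (hTU : T.comp U = U.comp T) (hTS : T.comp S = S.comp T) (hUS : U.comp S = S.comp U) :
    ∃ C D : ℝ, 0 < C ∧ C ≤ D ∧ ∀ f : H,
      Summable (fun i => ⟪Λ i (T f), Λ i (U f)⟫) ∧
      C * ‖f‖ ^ 2 ≤ ∑' i, ⟪Λ i (T f), Λ i (U f)⟫ ∧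
      ∑' i, ⟪Λ i (T f), Λ i (U f)⟫ ≤ D * ‖f‖ ^ 2 := by
  have hBessel : ∀ f (t : Finset ι), ∑ i ∈ t, ‖Λ i f‖ ^ 2 ≤ B * ‖f‖ ^ 2 := fun f t =>
    ((hframe f).1.sum_le_tsum t fun i _ => sq_nonneg _).trans (hframe f).2.2
  have hinner := hasSum_inner_of_bessel hBessel hS
  have hSunit : IsUnit S := isUnit_of_hasSum_inner hinner hA fun f => (hframe f).2.1
  have hT : T.IsPositive := (ContinuousLinearMap.isPositive_iff' T).2 ⟨hTsa, hTpos⟩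
  have hU : U.IsPositive := (ContinuousLinearMap.isPositive_iff' U).2 ⟨hUsa, hUpos⟩
  have cTU : Commute T U := hTU
  have cST : Commute S T := hTS.symm
  have cSU : Commute S U := hUS.symm
  have hP : (S * (T * U)).IsPositive :=
    (isPositive_of_hasSum_inner hinner).mul_of_commute (hT.mul_of_commute hU cTU)
      (cST.mul_right cSU)
  have hPU : S * (T * U) = U * (S * T) := by
    rw [cTU.eq, ← mul_assoc, cSU.eq, mul_assoc]
  have hsum : ∀ f, HasSum (fun i => ⟪Λ i (T f), Λ i (U f)⟫) ⟪(S * (T * U)) f, f⟫ := fun f => by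
    rw [hPU, mul_apply_eq_comp, mul_apply_eq_comp, hU.inner_left_eq_inner_right]
    exact hinner (T f) (U f)
  obtain ⟨C, hC, hCP⟩ := hP.exists_pos_mul_norm_sq_le_of_isUnit (hSunit.mul (hTinv.mul hUinv))
  refine ⟨C, max C ‖S * (T * U)‖, hC, le_max_left _ _, fun f => ⟨(hsum f).summable, ?_, ?_⟩⟩
  · simpa only [(hsum f).tsum_eq, re_to_real] using hCP f
  · rw [(hsum f).tsum_eq]
    calc ⟪(S * (T * U)) f, f⟫ ≤ ‖S * (T * U)‖ * ‖f‖ ^ 2 := by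
          simpa only [re_to_real] using (S * (T * U)).re_inner_apply_self_le f
      _ ≤ max C ‖S * (T * U)‖ * ‖f‖ ^ 2 := by gcongr; exact le_max_right _ _

/-- Proposition 2.3(2): if `{Λ_i}` is a g-frame for `H` with g-frame operator
`S_Λ = Σ_i Λ_i* Λ_i`, and `T, U ∈ GL⁺(H)` commute with each other and with `S_Λ`,
then `{Λ_i}` is a `(T,U)`-controlled g-frame for `H`. -/
theorem stmt2 {H : Type*} [NormedAddCommGroup H] [InnerProductSpace ℝ H] [CompleteSpace H]
    {ι : Type*} {G : ι → Type*} [∀ i, NormedAddCommGroup (G i)]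
    [∀ i, InnerProductSpace ℝ (G i)] [∀ i, CompleteSpace (G i)]
    (Λ : ∀ i, H →L[ℝ] G i)
    (A B : ℝ) (hA : 0 < A) (hAB : A ≤ B)
    (hframe : ∀ f : H, Summable (fun i => ‖Λ i f‖ ^ 2) ∧
      A * ‖f‖ ^ 2 ≤ ∑' i, ‖Λ i f‖ ^ 2 ∧ ∑' i, ‖Λ i f‖ ^ 2 ≤ B * ‖f‖ ^ 2)
    (S : H →L[ℝ] H)
    (hS : ∀ f : H, S f = ∑' i, (ContinuousLinearMap.adjoint (Λ i)) (Λ i f))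
    (T U : H →L[ℝ] H)
    (hTsa : IsSelfAdjoint T) (hTpos : ∀ f : H, 0 ≤ ⟪T f, f⟫) (hTinv : IsUnit T)
    (hUsa : IsSelfAdjoint U) (hUpos : ∀ f : H, 0 ≤ ⟪U f, f⟫) (hUinv : IsUnit U)
    (hTU : T.comp U = U.comp T) (hTS : T.comp S = S.comp T) (hUS : U.comp S = S.comp U) :
    ∃ C D : ℝ, 0 < C ∧ C ≤ D ∧ ∀ f : H,
      Summable (fun i => ⟪Λ i (T f), Λ i (U f)⟫) ∧
      C * ‖f‖ ^ 2 ≤ ∑' i, ⟪Λ i (T f), Λ i (U f)⟫ ∧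
      ∑' i, ⟪Λ i (T f), Λ i (U f)⟫ ≤ D * ‖f‖ ^ 2 :=
  stmt2_general Λ A B hA hframe S hS T U hTsa hTpos hTinv hUsa hUpos hUinv hTU hTS hUS
end

section
/- Let T, U ∈ GL(H) and let {Λ_i} be a g-frame for H with frame operator S_Λ. If the operator U* S_Λ T is positive, then {Λ_i} is a (T,U)-controlled g-frame for H. -/
open scoped RealInnerProductSpace

open ContinuousLinearMap in
/-- Auxiliary: the family `i ↦ Λᵢ* Λᵢ g` is summable when `{Λᵢ}` has a finite
upper frame bound. -/
lemma gframe_aux_summable {H : Type*} [NormedAddCommGroup H] [InnerProductSpace ℝ H]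
    [CompleteSpace H]
    {ι : Type*} {G : ι → Type*} [∀ i, NormedAddCommGroup (G i)]
    [∀ i, InnerProductSpace ℝ (G i)] [∀ i, CompleteSpace (G i)]
    (Λ : ∀ i, H →L[ℝ] G i) (B : ℝ)
    (hsum : ∀ f : H, Summable (fun i => ‖Λ i f‖ ^ 2))
    (hB : ∀ f : H, ∑' i, ‖Λ i f‖ ^ 2 ≤ B * ‖f‖ ^ 2)
    (g : H) : Summable (fun i => (adjoint (Λ i)) (Λ i g)) := by
  set B' : ℝ := max B 0 with hB'def
  have hB0 : 0 ≤ B' := le_max_right _ _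
  have hB' : ∀ f : H, ∑' i, ‖Λ i f‖ ^ 2 ≤ B' * ‖f‖ ^ 2 := fun f =>
    (hB f).trans (mul_le_mul_of_nonneg_right (le_max_left _ _) (sq_nonneg _))
  rw [summable_iff_vanishing_norm]
  intro ε hε
  have hδ : 0 < ε ^ 2 / (2 * (B' + 1)) := by positivity
  obtain ⟨s, hs⟩ := summable_iff_vanishing_norm.1 (hsum g) _ hδ
  refine ⟨s, fun t ht => ?_⟩
  set w : H := ∑ i ∈ t, (adjoint (Λ i)) (Λ i g) with hw
  have hkey : ‖w‖ ^ 2 ≤ ∑ i ∈ t, ‖Λ i g‖ * ‖Λ i w‖ := by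
    have : ‖w‖ ^ 2 = ⟪w, w⟫ := (real_inner_self_eq_norm_sq w).symm
    rw [this, hw, sum_inner]
    refine Finset.sum_le_sum (fun i _ => ?_)
    rw [ContinuousLinearMap.adjoint_inner_left]
    exact real_inner_le_norm _ _
  have hCS : (∑ i ∈ t, ‖Λ i g‖ * ‖Λ i w‖) ^ 2 ≤
      (∑ i ∈ t, ‖Λ i g‖ ^ 2) * (∑ i ∈ t, ‖Λ i w‖ ^ 2) :=
    Finset.sum_mul_sq_le_sq_mul_sq t _ _
  have hw2 : ∑ i ∈ t, ‖Λ i w‖ ^ 2 ≤ B' * ‖w‖ ^ 2 :=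
    le_trans (Summable.sum_le_tsum t (fun i _ => sq_nonneg _) (hsum w)) (hB' w)
  have hg2 : ∑ i ∈ t, ‖Λ i g‖ ^ 2 < ε ^ 2 / (2 * (B' + 1)) := by
    have := hs t ht
    calc ∑ i ∈ t, ‖Λ i g‖ ^ 2 ≤ ‖∑ i ∈ t, ‖Λ i g‖ ^ 2‖ := le_abs_self _
    _ < _ := this
  have hg2' : 0 ≤ ∑ i ∈ t, ‖Λ i g‖ ^ 2 := Finset.sum_nonneg (fun i _ => sq_nonneg _)
  -- combine: ‖w‖^4 ≤ (∑ ag)^2 ≤ (∑ ag²)(B ‖w‖²)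
  have h4 : (‖w‖ ^ 2) ^ 2 ≤ (∑ i ∈ t, ‖Λ i g‖ ^ 2) * (B' * ‖w‖ ^ 2) := by
    have h0 : 0 ≤ ∑ i ∈ t, ‖Λ i g‖ * ‖Λ i w‖ :=
      Finset.sum_nonneg (fun i _ => mul_nonneg (norm_nonneg _) (norm_nonneg _))
    calc (‖w‖ ^ 2) ^ 2 ≤ (∑ i ∈ t, ‖Λ i g‖ * ‖Λ i w‖) ^ 2 :=
          pow_le_pow_left₀ (sq_nonneg _) hkey 2
    _ ≤ (∑ i ∈ t, ‖Λ i g‖ ^ 2) * (∑ i ∈ t, ‖Λ i w‖ ^ 2) := hCS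
    _ ≤ (∑ i ∈ t, ‖Λ i g‖ ^ 2) * (B' * ‖w‖ ^ 2) :=
          mul_le_mul_of_nonneg_left hw2 hg2'
  have hfin : ‖w‖ ^ 2 < ε ^ 2 := by
    rcases eq_or_lt_of_le (norm_nonneg w) with hw0 | hw0
    · rw [← hw0]; nlinarith
    · have hwpos : 0 < ‖w‖ ^ 2 := by positivity
      have h5 : (‖w‖ ^ 2) ^ 2 < (ε ^ 2 / (2 * (B' + 1))) * (B' * ‖w‖ ^ 2) + ε^2/(2*(B'+1)) * ‖w‖^2 := by
        nlinarith [mul_le_mul_of_nonneg_right hg2.le (mul_nonneg hB0 hwpos.le), h4, mul_pos hδ hwpos]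
      have h6 : ‖w‖ ^ 2 < ε ^ 2 / (2 * (B' + 1)) * (B' + 1) := by
        nlinarith [h5, hwpos]
      calc ‖w‖ ^ 2 < ε ^ 2 / (2 * (B' + 1)) * (B' + 1) := h6
      _ ≤ ε ^ 2 := by
        rw [div_mul_eq_mul_div, mul_comm (2:ℝ) (B'+1), ← div_div]
        have : ε ^ 2 * (B' + 1) / (B' + 1) = ε ^ 2 := by
          field_simp
        rw [this]
        linarith [half_le_self (sq_nonneg ε)]
  calc ‖w‖ ≤ |‖w‖| := le_abs_self _
  _ < ε := by
    rw [abs_of_nonneg (norm_nonneg w)]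
    nlinarith [norm_nonneg w]

/-- Corollary 2.4: if `T, U ∈ GL(H)`, `{Λ_i}` is a g-frame for `H` with frame
operator `S_Λ`, and `U* S_Λ T` is positive, then `{Λ_i}` is a `(T,U)`-controlled
g-frame for `H`. -/
theorem stmt3 {H : Type*} [NormedAddCommGroup H] [InnerProductSpace ℝ H] [CompleteSpace H]
    {ι : Type*} {G : ι → Type*} [∀ i, NormedAddCommGroup (G i)]
    [∀ i, InnerProductSpace ℝ (G i)] [∀ i, CompleteSpace (G i)]
    (Λ : ∀ i, H →L[ℝ] G i)
    (A B : ℝ) (hA : 0 < A) (hAB : A ≤ B)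
    (hframe : ∀ f : H, Summable (fun i => ‖Λ i f‖ ^ 2) ∧
      A * ‖f‖ ^ 2 ≤ ∑' i, ‖Λ i f‖ ^ 2 ∧ ∑' i, ‖Λ i f‖ ^ 2 ≤ B * ‖f‖ ^ 2)
    (S : H →L[ℝ] H)
    (hS : ∀ f : H, S f = ∑' i, (ContinuousLinearMap.adjoint (Λ i)) (Λ i f))
    (T U : H →L[ℝ] H) (hTinv : IsUnit T) (hUinv : IsUnit U)
    (hposSA : IsSelfAdjoint ((ContinuousLinearMap.adjoint U).comp (S.comp T)))
    (hpos : ∀ f : H, 0 ≤ ⟪((ContinuousLinearMap.adjoint U).comp (S.comp T)) f, f⟫) :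
    ∃ C D : ℝ, 0 < C ∧ C ≤ D ∧ ∀ f : H,
      Summable (fun i => ⟪Λ i (T f), Λ i (U f)⟫) ∧
      C * ‖f‖ ^ 2 ≤ ∑' i, ⟪Λ i (T f), Λ i (U f)⟫ ∧
      ∑' i, ⟪Λ i (T f), Λ i (U f)⟫ ≤ D * ‖f‖ ^ 2 := by
  classical
  set M : H →L[ℝ] H := (ContinuousLinearMap.adjoint U).comp (S.comp T) with hM
  -- the key summability lemma
  have hsummable : ∀ g : H, Summable (fun i => (ContinuousLinearMap.adjoint (Λ i)) (Λ i g)) :=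
    gframe_aux_summable Λ B (fun f => (hframe f).1) (fun f => (hframe f).2.2)
  -- inner product representation of S
  have hSinner : ∀ g h : H, HasSum (fun i => ⟪Λ i g, Λ i h⟫) ⟪S g, h⟫ := by
    intro g h
    have h1 : HasSum (fun i => (ContinuousLinearMap.adjoint (Λ i)) (Λ i g)) (S g) := by
      rw [hS g]; exact (hsummable g).hasSum
    have h2 := h1.mapL (innerSL ℝ h)
    have h3 : ∀ i, ⟪h, (ContinuousLinearMap.adjoint (Λ i)) (Λ i g)⟫ = ⟪Λ i g, Λ i h⟫ := by
      intro i
      rw [real_inner_comm, ContinuousLinearMap.adjoint_inner_left]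
    simp only [innerSL_apply_apply] at h2
    simp only [h3] at h2
    rwa [real_inner_comm] at h2
  -- S is coercive, hence a unit
  have hScoer : ∀ g : H, A * ‖g‖ ^ 2 ≤ ⟪S g, g⟫ := by
    intro g
    have := (hSinner g g).tsum_eq
    have heq : ∑' i, ⟪Λ i g, Λ i g⟫ = ∑' i, ‖Λ i g‖ ^ 2 := by
      congr 1; ext i; exact real_inner_self_eq_norm_sq _
    rw [← this, heq]
    exact (hframe g).2.1
  have hSunit : IsUnit S := by
    refine ContinuousLinearMap.isUnit_of_forall_le_norm_inner_map S (c := A.toNNReal)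
      (by simpa using hA) (fun x => ?_)
    have h1 := hScoer x
    have h2 : (0:ℝ) ≤ ⟪S x, x⟫ := le_trans (by positivity) h1
    rw [Real.norm_eq_abs, abs_of_nonneg h2]
    calc ‖x‖ ^ 2 * (A.toNNReal : ℝ) = A * ‖x‖ ^ 2 := by
          rw [Real.coe_toNNReal _ hA.le]; ring
    _ ≤ ⟪S x, x⟫ := h1
  -- adjoint U is a unit
  have hUadj : IsUnit (ContinuousLinearMap.adjoint U) := by
    obtain ⟨V, hV1, hV2⟩ := isUnit_iff_exists.1 hUinv
    refine isUnit_iff_exists.2 ⟨ContinuousLinearMap.adjoint V, ?_, ?_⟩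
    · have : (V * U) = 1 := hV2
      calc ContinuousLinearMap.adjoint U * ContinuousLinearMap.adjoint V
          = ContinuousLinearMap.adjoint (V * U) := by
            rw [ContinuousLinearMap.mul_def, ContinuousLinearMap.mul_def,
              ContinuousLinearMap.adjoint_comp]
      _ = 1 := by rw [this, ContinuousLinearMap.one_def, ContinuousLinearMap.adjoint_id]
    · have : (U * V) = 1 := hV1
      calc ContinuousLinearMap.adjoint V * ContinuousLinearMap.adjoint U
          = ContinuousLinearMap.adjoint (U * V) := by
            rw [ContinuousLinearMap.mul_def, ContinuousLinearMap.mul_def,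
              ContinuousLinearMap.adjoint_comp]
      _ = 1 := by rw [this, ContinuousLinearMap.one_def, ContinuousLinearMap.adjoint_id]
  have hMunit : IsUnit M := by
    have : M = ContinuousLinearMap.adjoint U * (S * T) := rfl
    rw [this]
    exact hUadj.mul (hSunit.mul hTinv)
  -- the inverse N of M
  set N : H →L[ℝ] H := ↑hMunit.unit⁻¹ with hN
  have hMN : ∀ f : H, M (N f) = f := by
    intro f
    have : (M * N) f = (1 : H →L[ℝ] H) f := by
      rw [show M * N = 1 from hMunit.mul_val_inv]
    simpa using this
  -- Cauchy-Schwarz for the positive operator M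
  have hsymm : ∀ x y : H, ⟪M x, y⟫ = ⟪x, M y⟫ := by
    intro x y
    exact (ContinuousLinearMap.isSelfAdjoint_iff_isSymmetric.1 hposSA) x y
  have hCS : ∀ x y : H, ⟪M x, y⟫ ^ 2 ≤ ⟪M x, x⟫ * ⟪M y, y⟫ := by
    intro x y
    have hquad : ∀ t : ℝ, 0 ≤ ⟪M y, y⟫ * (t * t) + (2 * ⟪M x, y⟫) * t + ⟪M x, x⟫ := by
      intro t
      have h0 := hpos (x + t • y)
      have hexp : ⟪M (x + t • y), x + t • y⟫ =
          ⟪M y, y⟫ * (t * t) + (2 * ⟪M x, y⟫) * t + ⟪M x, x⟫ := by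
        have hsymm' : ⟪M y, x⟫ = ⟪M x, y⟫ := by
          rw [hsymm y x, real_inner_comm]
        simp only [map_add, map_smul, inner_add_left, inner_add_right,
          real_inner_smul_left, real_inner_smul_right, hsymm']
        ring
      rw [hexp] at h0
      exact h0
    have hd := discrim_le_zero hquad
    rw [discrim] at hd
    nlinarith
  -- value identity
  have hval : ∀ f : H, HasSum (fun i => ⟪Λ i (T f), Λ i (U f)⟫) ⟪M f, f⟫ := by
    intro f
    have h1 := hSinner (T f) (U f)
    have h2 : ⟪M f, f⟫ = ⟪S (T f), U f⟫ := by
      rw [hM]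
      simp only [ContinuousLinearMap.coe_comp', Function.comp_apply]
      rw [ContinuousLinearMap.adjoint_inner_left]
    rwa [← h2] at h1
  -- the bounds
  refine ⟨(‖N‖ + 1)⁻¹, ‖M‖ + (‖N‖ + 1)⁻¹, by positivity, le_add_of_nonneg_left (norm_nonneg _),
    fun f => ?_⟩
  have hvf := hval f
  refine ⟨hvf.summable, ?_, ?_⟩
  · rw [hvf.tsum_eq]
    -- lower bound: ‖f‖^4 ≤ (‖N‖+1) * ‖f‖^2 * ⟪M f, f⟫
    have hg := hMN f
    have h1 : ⟪f, f⟫ = ⟪M (N f), f⟫ := by rw [hg]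
    have h2 : ⟪M (N f), f⟫ ^ 2 ≤ ⟪M (N f), N f⟫ * ⟪M f, f⟫ := hCS (N f) f
    have h3 : ⟪M (N f), N f⟫ ≤ ‖N‖ * ‖f‖ ^ 2 := by
      rw [hg]
      calc ⟪f, N f⟫ ≤ ‖f‖ * ‖N f‖ := real_inner_le_norm _ _
      _ ≤ ‖f‖ * (‖N‖ * ‖f‖) :=
            mul_le_mul_of_nonneg_left (N.le_opNorm f) (norm_nonneg f)
      _ = ‖N‖ * ‖f‖ ^ 2 := by ring
    have hMf : (0:ℝ) ≤ ⟪M f, f⟫ := hpos f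
    have h4 : (‖f‖ ^ 2) ^ 2 ≤ (‖N‖ + 1) * ‖f‖ ^ 2 * ⟪M f, f⟫ := by
      have h5 : ⟪f, f⟫ = ‖f‖ ^ 2 := real_inner_self_eq_norm_sq f
      have h6 : ⟪M (N f), N f⟫ * ⟪M f, f⟫ ≤ (‖N‖ + 1) * ‖f‖ ^ 2 * ⟪M f, f⟫ := by
        apply mul_le_mul_of_nonneg_right _ hMf
        nlinarith [sq_nonneg ‖f‖]
      calc (‖f‖ ^ 2) ^ 2 = ⟪M (N f), f⟫ ^ 2 := by rw [← h1, h5]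
      _ ≤ ⟪M (N f), N f⟫ * ⟪M f, f⟫ := h2
      _ ≤ _ := h6
    rcases eq_or_lt_of_le (sq_nonneg ‖f‖) with h0 | h0
    · rw [← h0]; simpa using hMf
    · rw [inv_mul_le_iff₀ (by positivity)]
      nlinarith [h4, h0]
  · rw [hvf.tsum_eq]
    calc ⟪M f, f⟫ ≤ ‖M f‖ * ‖f‖ := real_inner_le_norm _ _
    _ ≤ ‖M‖ * ‖f‖ * ‖f‖ := mul_le_mul_of_nonneg_right (M.le_opNorm f) (norm_nonneg f)
    _ = ‖M‖ * ‖f‖ ^ 2 := by ring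
    _ ≤ (‖M‖ + (‖N‖ + 1)⁻¹) * ‖f‖ ^ 2 := by
      apply mul_le_mul_of_nonneg_right _ (sq_nonneg _)
      simp [le_add_iff_nonneg_right]
      positivity
end

section
/- Let T, U ∈ GL(H) and let {Λ_i} be a (T,U)-controlled g-frame for H with bounds A, B. Let {Γ_i} be a g-complete family of bounded operators such that for some 0 < R < A, 0 ≤ Σ_i ⟨U*(Λ_i*Λ_i − Γ_i*Γ_i)T f, f⟩ ≤ R‖f‖² for all f ∈ H. Then {Γ_i} is a (T,U)-controlled g-frame for H with bounds A − R and B + R. -/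
open scoped RealInnerProductSpace

/-- Proposition 2.5: let `T, U ∈ GL(H)`, `{Λ_i}` a `(T,U)`-controlled g-frame with
bounds `A, B`, and `{Γ_i}` a g-complete family such that for some `0 < R < A`,
`0 ≤ Σ_i ⟨U*(Λ_i*Λ_i − Γ_i*Γ_i)T f, f⟩ ≤ R‖f‖²` for all `f`. Then `{Γ_i}` is a
`(T,U)`-controlled g-frame with bounds `A − R` and `B + R`. -/
theorem stmt4 {H : Type*} [NormedAddCommGroup H] [InnerProductSpace ℝ H] [CompleteSpace H]
    {ι : Type*} {G : ι → Type*} [∀ i, NormedAddCommGroup (G i)]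
    [∀ i, InnerProductSpace ℝ (G i)] [∀ i, CompleteSpace (G i)]
    (Λ Γ : ∀ i, H →L[ℝ] G i)
    (T U : H →L[ℝ] H) (hTinv : IsUnit T) (hUinv : IsUnit U)
    (A B : ℝ) (hA : 0 < A) (hAB : A ≤ B)
    (hΛBes : ∃ C : ℝ, ∀ f : H, ∑' i, ‖Λ i f‖ ^ 2 ≤ C * ‖f‖ ^ 2)
    (hΛ : ∀ f : H, Summable (fun i => ⟪Λ i (T f), Λ i (U f)⟫) ∧
      A * ‖f‖ ^ 2 ≤ ∑' i, ⟪Λ i (T f), Λ i (U f)⟫ ∧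
      ∑' i, ⟪Λ i (T f), Λ i (U f)⟫ ≤ B * ‖f‖ ^ 2)
    (hΓcomplete :
      (⨆ i, LinearMap.range ((ContinuousLinearMap.adjoint (Γ i)) : G i →ₗ[ℝ] H)).topologicalClosure
        = ⊤)
    (R : ℝ) (hR : 0 < R) (hRA : R < A)
    (hpert : ∀ f : H,
      Summable (fun i => ⟪Λ i (T f), Λ i (U f)⟫ - ⟪Γ i (T f), Γ i (U f)⟫) ∧
      0 ≤ ∑' i, (⟪Λ i (T f), Λ i (U f)⟫ - ⟪Γ i (T f), Γ i (U f)⟫) ∧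
      ∑' i, (⟪Λ i (T f), Λ i (U f)⟫ - ⟪Γ i (T f), Γ i (U f)⟫) ≤ R * ‖f‖ ^ 2) :
    ∀ f : H, Summable (fun i => ⟪Γ i (T f), Γ i (U f)⟫) ∧
      (A - R) * ‖f‖ ^ 2 ≤ ∑' i, ⟪Γ i (T f), Γ i (U f)⟫ ∧
      ∑' i, ⟪Γ i (T f), Γ i (U f)⟫ ≤ (B + R) * ‖f‖ ^ 2 := by
  intro f
  obtain ⟨hsΛ, hΛlo, hΛhi⟩ := hΛ f
  obtain ⟨hsP, hPlo, hPhi⟩ := hpert f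
  have hsΓ : Summable (fun i => ⟪Γ i (T f), Γ i (U f)⟫) := by
    have := hsΛ.sub hsP
    simpa using this
  have heq : ∑' i, ⟪Γ i (T f), Γ i (U f)⟫ =
      (∑' i, ⟪Λ i (T f), Λ i (U f)⟫) -
        ∑' i, (⟪Λ i (T f), Λ i (U f)⟫ - ⟪Γ i (T f), Γ i (U f)⟫) := by
    rw [← Summable.tsum_sub hsΛ hsP]
    congr 1
    ext i
    ring
  refine ⟨hsΓ, ?_, ?_⟩ <;> rw [heq] <;> linarith
end
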